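/- arXiv:0908.4538 — 5 statements merged into one kernel-verified Lean document; each statement's English description precedes it below -/
import Mathlib

section
/- Let U : (0,∞) → ℝ be a utility function with lim_{x→0+} U′(x) = +∞ and lim_{x→∞} U′(x) = 0. For each integer n ≥ 2 let x̲ⁿ, x̄ⁿ ∈ (0,∞) be the unique points with U′(x̲ⁿ) = n and U′(x̄ⁿ) = 1/n, define ξⁿ(x) = x̲ⁿ − x + n for 0 ≤ x ≤ x̲ⁿ, ξⁿ(x) = U′(x) for x̲ⁿ ≤ x ≤ x̄ⁿ, ξⁿ(x) = 1/n for x > x̄ⁿ, and set Uₙ(x) = U(x̲ⁿ) − (1/2)(x̲ⁿ)² − n·x̲ⁿ + ∫₀^{x∧x̄ⁿ} ξⁿ(y) dy for x ≥ 0. Then each Uₙ is a good truncated utility function with effective domain [0, x̄ⁿ], Uₙ(x) = U(x) for all x ∈ [x̲ⁿ, x̄ⁿ], and for every x > 0 one has Uₙ(x) → U(x) as n → ∞. -/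
open Set Filter

/-!
On `[x̲ⁿ, x̄ⁿ]` the integrand `ξⁿ` is `U′`, and the linear piece on `[0, x̲ⁿ]` integrates to
exactly `½(x̲ⁿ)² + n x̲ⁿ`, so the fundamental theorem of calculus gives `Uₙ = U` there. Since `U′`
is strictly decreasing and `1/n ≤ U′(x) ≤ n` for all large `n`, every `x > 0` eventually lies in
`[x̲ⁿ, x̄ⁿ]`, so `Uₙ(x)` is eventually equal to `U(x)`.
-/

/-- `V` is a good truncated utility function with effective domain `[0, K]`, derivative `V'` on
`(0, K)` and `V'(0+) = L`. -/
def IsGoodTruncatedUtility (V V' : ℝ → ℝ) (K L : ℝ) : Prop :=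
  ContinuousOn V (Ici 0) ∧
    (∀ x ∈ Ioo 0 K, HasDerivAt V (V' x) x) ∧
    ContinuousOn V' (Ioo 0 K) ∧
    (∀ x ∈ Ioo 0 K, 0 < V' x) ∧
    StrictAntiOn V' (Ioo 0 K) ∧
    Tendsto V' (nhdsWithin 0 (Ioo 0 K)) (nhds L) ∧
    ∀ x, K ≤ x → V x = V K

theorem isGoodTruncatedUtility_const_add_integral_min {g : ℝ → ℝ} {K : ℝ} (hg : Continuous g)
    (hpos : ∀ x ∈ Ioo 0 K, 0 < g x) (hanti : StrictAntiOn g (Ioo 0 K)) (c : ℝ) :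
    IsGoodTruncatedUtility (fun x => c + ∫ y in 0..min x K, g y) g K (g 0) := by
  have hprimitive : Continuous fun x => ∫ y in 0..x, g y :=
    intervalIntegral.continuous_primitive (fun _ _ => hg.intervalIntegrable _ _) 0
  refine ⟨?_, fun x hx => ?_, hg.continuousOn, hpos, hanti,
    (hg.tendsto 0).mono_left nhdsWithin_le_nhds,
    fun x hx => by simp only [min_eq_right hx, min_self]⟩
  · exact (continuous_const.add (hprimitive.comp (continuous_id.min continuous_const))).continuousOn
  · have hmin : (fun t => c + ∫ y in 0..t, g y) =ᶠ[nhds x] fun t => c + ∫ y in 0..min t K, g y := by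
      filter_upwards [Iio_mem_nhds hx.2] with t ht
      rw [min_eq_left ht.le]
    exact ((hg.integral_hasStrictDerivAt 0 x).hasDerivAt.const_add c).congr_of_eventuallyEq
      hmin.symm

noncomputable def truncatedMarginal (f : ℝ → ℝ) (a b x : ℝ) : ℝ :=
  if x ≤ a then a - x + f a else if x ≤ b then f x else f b

namespace truncatedMarginal

variable {f F : ℝ → ℝ} {a b x : ℝ}

theorem eq_of_le (hx : x ≤ a) : truncatedMarginal f a b x = a - x + f a := if_pos hx

theorem eq_of_mem_Icc (hx : x ∈ Icc a b) : truncatedMarginal f a b x = f x := by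
  rcases hx.1.eq_or_lt with rfl | hax
  · simp [truncatedMarginal]
  · rw [truncatedMarginal, if_neg hax.not_ge, if_pos hx.2]

theorem eq_max_add (hab : a ≤ b) (x : ℝ) :
    truncatedMarginal f a b x = max (a - x) 0 + f (max a (min b x)) := by
  rcases le_total x a with hxa | hax
  · rw [eq_of_le hxa, max_eq_left (by linarith), min_eq_right (hxa.trans hab), max_eq_left hxa]
  rcases le_or_gt x b with hxb | hbx
  · rw [eq_of_mem_Icc ⟨hax, hxb⟩, max_eq_right (by linarith), min_eq_right hxb, max_eq_right hax,
      zero_add]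
  · rw [truncatedMarginal, if_neg (hab.trans_lt hbx).not_ge, if_neg hbx.not_ge,
      max_eq_right (by linarith), min_eq_left hbx.le, max_eq_right hab, zero_add]

theorem continuous (hab : a ≤ b) (hf : ContinuousOn f (Icc a b)) :
    Continuous (truncatedMarginal f a b) := by
  rw [funext (eq_max_add hab)]
  refine ((continuous_const.sub continuous_id).max continuous_const).add
    (hf.comp_continuous (continuous_const.max (continuous_const.min continuous_id)) fun x => ?_)
  exact ⟨le_max_left _ _, max_le hab (min_le_left _ _)⟩

theorem pos (hab : a ≤ b) (hf : ∀ y ∈ Icc a b, 0 < f y) (x : ℝ) :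
    0 < truncatedMarginal f a b x := by
  rw [eq_max_add hab]
  exact add_pos_of_nonneg_of_pos (le_max_right _ _)
    (hf _ ⟨le_max_left _ _, max_le hab (min_le_left _ _)⟩)

theorem strictAntiOn (hf : StrictAntiOn f (Icc a b)) :
    StrictAntiOn (truncatedMarginal f a b) (Iic b) := by
  intro x hx y hy hxy
  rcases le_or_gt y a with hya | hay
  · rw [eq_of_le hya, eq_of_le (hxy.le.trans hya)]
    linarith
  have hab : a ≤ b := hay.le.trans hy
  rw [eq_of_mem_Icc ⟨hay.le, hy⟩]
  rcases le_or_gt x a with hxa | hax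
  · have : f y < f a := hf ⟨le_rfl, hab⟩ ⟨hay.le, hy⟩ hay
    rw [eq_of_le hxa]
    linarith
  · rw [eq_of_mem_Icc ⟨hax.le, hx⟩]
    exact hf ⟨hax.le, hx⟩ ⟨hay.le, hy⟩ hxy

theorem integral_eq_of_mem_Icc (ha : 0 ≤ a) (hx : x ∈ Icc a b)
    (hF : ∀ y ∈ Icc a b, HasDerivAt F (f y) y) (hf : ContinuousOn f (Icc a b)) :
    ∫ y in 0..x, truncatedMarginal f a b y = a ^ 2 / 2 + a * f a + (F x - F a) := by
  have hg := continuous (hx.1.trans hx.2) hf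
  have hramp : ∀ y ∈ uIcc 0 a,
      HasDerivAt (fun t => (a + f a) * t - t ^ 2 / 2) (truncatedMarginal f a b y) y := by
    intro y hy
    rw [uIcc_of_le ha] at hy
    rw [eq_of_le hy.2]
    refine (((hasDerivAt_id' y).const_mul (a + f a)).sub
      ((hasDerivAt_pow 2 y).div_const 2)).congr_deriv ?_
    push_cast
    ring
  have hmarginal : ∀ y ∈ uIcc a x, HasDerivAt F (truncatedMarginal f a b y) y := by
    intro y hy
    rw [uIcc_of_le hx.1] at hy
    rw [eq_of_mem_Icc ⟨hy.1, hy.2.trans hx.2⟩]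
    exact hF y ⟨hy.1, hy.2.trans hx.2⟩
  rw [← intervalIntegral.integral_add_adjacent_intervals (hg.intervalIntegrable 0 a)
      (hg.intervalIntegrable a x),
    intervalIntegral.integral_eq_sub_of_hasDerivAt hramp (hg.intervalIntegrable 0 a),
    intervalIntegral.integral_eq_sub_of_hasDerivAt hmarginal (hg.intervalIntegrable a x)]
  ring

end truncatedMarginal

theorem isGoodTruncatedUtility_truncatedMarginal {f : ℝ → ℝ} {a b : ℝ} (ha : 0 ≤ a) (hab : a ≤ b)
    (hf : ContinuousOn f (Icc a b)) (hpos : ∀ y ∈ Icc a b, 0 < f y)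
    (hanti : StrictAntiOn f (Icc a b)) (c : ℝ) :
    IsGoodTruncatedUtility (fun x => c + ∫ y in 0..min x b, truncatedMarginal f a b y)
      (truncatedMarginal f a b) b (a + f a) := by
  have h := isGoodTruncatedUtility_const_add_integral_min (truncatedMarginal.continuous hab hf)
    (fun x _ => truncatedMarginal.pos hab hpos x)
    ((truncatedMarginal.strictAntiOn hanti).mono (Ioo_subset_Ioc_self.trans Ioc_subset_Iic_self)) c
  rwa [truncatedMarginal.eq_of_le ha, sub_zero] at h

theorem StrictAntiOn.eventually_mem_Icc {f : ℝ → ℝ} (hf : StrictAntiOn f (Ioi 0)) {l u : ℕ → ℝ}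
    (hl : ∀ᶠ n in atTop, 0 < l n ∧ f (l n) = n) (hu : ∀ᶠ n in atTop, 0 < u n ∧ f (u n) = 1 / n)
    {x : ℝ} (hx : 0 < x) (hfx : 0 < f x) : ∀ᶠ n in atTop, x ∈ Icc (l n) (u n) := by
  filter_upwards [hl, hu, tendsto_natCast_atTop_atTop.eventually_ge_atTop (f x),
    tendsto_one_div_atTop_nhds_zero_nat.eventually (ge_mem_nhds hfx)]
    with n ⟨hln, hfl⟩ ⟨hun, hfu⟩ hfx_le hfx_ge
  exact ⟨(hf.le_iff_ge hx hln).1 (hfl ▸ hfx_le), (hf.le_iff_ge hun hx).1 (hfu ▸ hfx_ge)⟩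

theorem stmt_2_general
    (U U' : ℝ → ℝ)
    -- U is a utility function on (0,∞):
    (hUderiv : ∀ x ∈ Ioi (0 : ℝ), HasDerivAt U (U' x) x)
    (hU'cont : ContinuousOn U' (Ioi 0))
    (hU'pos : ∀ x ∈ Ioi (0 : ℝ), 0 < U' x)
    (hU'anti : StrictAntiOn U' (Ioi 0))
    -- the points x̲ⁿ and x̄ⁿ:
    (xl xu : ℕ → ℝ)
    (hxl : ∀ n : ℕ, 2 ≤ n → 0 < xl n ∧ U' (xl n) = (n : ℝ))
    (hxu : ∀ n : ℕ, 2 ≤ n → 0 < xu n ∧ U' (xu n) = 1 / (n : ℝ))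
    -- the functions ξⁿ and Uₙ:
    (ξ : ℕ → ℝ → ℝ)
    (hξ : ∀ (n : ℕ) (x : ℝ), ξ n x =
      if x ≤ xl n then xl n - x + (n : ℝ)
      else if x ≤ xu n then U' x else 1 / (n : ℝ))
    (UN : ℕ → ℝ → ℝ)
    (hUN : ∀ (n : ℕ) (x : ℝ), UN n x =
      U (xl n) - (1 / 2) * (xl n) ^ 2 - (n : ℝ) * xl n
        + ∫ y in (0 : ℝ)..(min x (xu n)), ξ n y) :
    -- each Uₙ is a good truncated utility function with effective domain [0, x̄ⁿ]:
    (∀ n : ℕ, 2 ≤ n →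
      ContinuousOn (UN n) (Ici 0) ∧
      (∀ x ∈ Ioo 0 (xu n), HasDerivAt (UN n) (ξ n x) x) ∧
      ContinuousOn (ξ n) (Ioo 0 (xu n)) ∧
      (∀ x ∈ Ioo 0 (xu n), 0 < ξ n x) ∧
      StrictAntiOn (ξ n) (Ioo 0 (xu n)) ∧
      Tendsto (ξ n) (nhdsWithin 0 (Ioo 0 (xu n))) (nhds (xl n + (n : ℝ))) ∧
      (∀ x, xu n ≤ x → UN n x = UN n (xu n))) ∧
    -- Uₙ agrees with U on [x̲ⁿ, x̄ⁿ]: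
    (∀ n : ℕ, 2 ≤ n → ∀ x ∈ Icc (xl n) (xu n), UN n x = U x) ∧
    -- pointwise convergence Uₙ(x) → U(x) for x > 0:
    (∀ x : ℝ, 0 < x → Tendsto (fun n => UN n x) atTop (nhds (U x))) := by
  have hξn : ∀ n, 2 ≤ n → ξ n = truncatedMarginal U' (xl n) (xu n) := fun n hn =>
    funext fun x => by rw [hξ, truncatedMarginal, (hxl n hn).2, (hxu n hn).2]
  have hIcc : ∀ n, 2 ≤ n → Icc (xl n) (xu n) ⊆ Ioi 0 := fun n hn y hy => (hxl n hn).1.trans_le hy.1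
  have hagree : ∀ n, 2 ≤ n → ∀ x ∈ Icc (xl n) (xu n), UN n x = U x := by
    intro n hn x hx
    rw [hUN, min_eq_left hx.2, hξn n hn, truncatedMarginal.integral_eq_of_mem_Icc (hxl n hn).1.le hx
      (fun y hy => hUderiv y (hIcc n hn hy)) (hU'cont.mono (hIcc n hn)), (hxl n hn).2]
    ring
  refine ⟨fun n hn => ?_, hagree, fun x hx => ?_⟩
  · obtain ⟨hl, hl'⟩ := hxl n hn
    have hab : xl n ≤ xu n := by
      refine (hU'anti.le_iff_ge (hxu n hn).1 hl).1 ?_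
      have : (2 : ℝ) ≤ n := by exact_mod_cast hn
      rw [hl', (hxu n hn).2, div_le_iff₀ (by linarith)]
      nlinarith
    have hgood := isGoodTruncatedUtility_truncatedMarginal hl.le hab (hU'cont.mono (hIcc n hn))
      (fun y hy => hU'pos y (hIcc n hn hy)) (hU'anti.mono (hIcc n hn))
      (U (xl n) - 1 / 2 * xl n ^ 2 - n * xl n)
    rw [hl'] at hgood
    rw [funext (hUN n), hξn n hn]
    exact hgood
  · have hmem := hU'anti.eventually_mem_Icc (eventually_atTop.2 ⟨2, hxl⟩)
      (eventually_atTop.2 ⟨2, hxu⟩) hx (hU'pos x hx)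
    refine tendsto_const_nhds.congr' ?_
    filter_upwards [hmem, eventually_ge_atTop 2] with n hxn hn
    exact (hagree n hn x hxn).symm

theorem stmt_2
    (U U' : ℝ → ℝ)
    -- U is a utility function on (0,∞):
    (hUderiv : ∀ x ∈ Ioi (0 : ℝ), HasDerivAt U (U' x) x)
    (hU'cont : ContinuousOn U' (Ioi 0))
    (hU'pos : ∀ x ∈ Ioi (0 : ℝ), 0 < U' x)
    (hU'anti : StrictAntiOn U' (Ioi 0))
    (hU'zero : Tendsto U' (nhdsWithin 0 (Ioi 0)) atTop)
    (hU'top : Tendsto U' atTop (nhds 0))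
    -- the points x̲ⁿ and x̄ⁿ:
    (xl xu : ℕ → ℝ)
    (hxl : ∀ n : ℕ, 2 ≤ n → 0 < xl n ∧ U' (xl n) = (n : ℝ))
    (hxu : ∀ n : ℕ, 2 ≤ n → 0 < xu n ∧ U' (xu n) = 1 / (n : ℝ))
    -- the functions ξⁿ and Uₙ:
    (ξ : ℕ → ℝ → ℝ)
    (hξ : ∀ (n : ℕ) (x : ℝ), ξ n x =
      if x ≤ xl n then xl n - x + (n : ℝ)
      else if x ≤ xu n then U' x else 1 / (n : ℝ))
    (UN : ℕ → ℝ → ℝ)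
    (hUN : ∀ (n : ℕ) (x : ℝ), UN n x =
      U (xl n) - (1 / 2) * (xl n) ^ 2 - (n : ℝ) * xl n
        + ∫ y in (0 : ℝ)..(min x (xu n)), ξ n y) :
    -- each Uₙ is a good truncated utility function with effective domain [0, x̄ⁿ]:
    (∀ n : ℕ, 2 ≤ n →
      ContinuousOn (UN n) (Ici 0) ∧
      (∀ x ∈ Ioo 0 (xu n), HasDerivAt (UN n) (ξ n x) x) ∧
      ContinuousOn (ξ n) (Ioo 0 (xu n)) ∧
      (∀ x ∈ Ioo 0 (xu n), 0 < ξ n x) ∧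
      StrictAntiOn (ξ n) (Ioo 0 (xu n)) ∧
      Tendsto (ξ n) (nhdsWithin 0 (Ioo 0 (xu n))) (nhds (xl n + (n : ℝ))) ∧
      (∀ x, xu n ≤ x → UN n x = UN n (xu n))) ∧
    -- Uₙ agrees with U on [x̲ⁿ, x̄ⁿ]:
    (∀ n : ℕ, 2 ≤ n → ∀ x ∈ Icc (xl n) (xu n), UN n x = U x) ∧
    -- pointwise convergence Uₙ(x) → U(x) for x > 0:
    (∀ x : ℝ, 0 < x → Tendsto (fun n => UN n x) atTop (nhds (U x))) :=
  stmt_2_general U U' hUderiv hU'cont hU'pos hU'anti xl xu hxl hxu ξ hξ UN hUN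
end

section
/- Let (Ω,𝓕,P) be a probability space, U a good truncated utility function with effective domain [0,K] and inverse marginal utility I, H : Ω → (0,∞) a random variable with E[H] < ∞, and y > 0. Then for every measurable B : Ω → [0,K] one has E[U(B) − y·H·B] ≤ E[U(I(yH)) − y·H·I(yH)], and equality holds if and only if B = I(yH) P-almost surely. (The maximization of the Lagrangian functional, inequality (6.18) and its equality condition.) -/
/-!
For fixed `η > 0`, the point `I η` is the unique maximiser of `b ↦ U b - η * b` on `[0, K]`.
By the mean value theorem it suffices that `U' - η` is positive on `(0, I η)` and negative on
`(I η, K)`; this follows from `U' (I η) = η` for `U'(K-) < η < U'(0+)` (with the cases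
`I η = 0` and `I η = K` outside that range) and the strict monotonicity of `U'`.
Integrating the pointwise inequality at `η = y * H ω` gives the claim, and two ordered integrable
functions with equal integrals agree almost everywhere.
-/

open Set Filter MeasureTheory Topology

lemma ContinuousOn.measurable_comp_of_mapsTo {α X Y : Type*} [MeasurableSpace α]
    [TopologicalSpace X] [MeasurableSpace X] [OpensMeasurableSpace X]
    [TopologicalSpace Y] [MeasurableSpace Y] [BorelSpace Y]
    {f : X → Y} {s : Set X} (hf : ContinuousOn f s) {g : α → X} (hg : Measurable g)
    (hgs : ∀ a, g a ∈ s) : Measurable fun a => f (g a) :=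
  hf.domRestrict.measurable.comp (hg.subtype_mk (h := hgs))

lemma integrable_sub_mul_of_mem_isCompact {Ω : Type*} [MeasurableSpace Ω] {P : Measure Ω}
    [IsFiniteMeasure P] {U : ℝ → ℝ} {s : Set ℝ} (hs : IsCompact s) (hU : ContinuousOn U s)
    {η g : Ω → ℝ} (hη : Integrable η P) (hg : Measurable g) (hgs : ∀ ω, g ω ∈ s) :
    Integrable (fun ω => U (g ω) - η ω * g ω) P := by
  obtain ⟨M, hM⟩ := hs.exists_bound_of_continuousOn hU
  obtain ⟨C, hC⟩ := hs.exists_bound_of_continuousOn continuousOn_id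
  have hUg : Integrable (fun ω => U (g ω)) P :=
    (integrable_const M).mono' (hU.measurable_comp_of_mapsTo hg hgs).aestronglyMeasurable
      (ae_of_all _ fun ω => hM _ (hgs ω))
  exact hUg.sub (hη.mul_bdd hg.aestronglyMeasurable (ae_of_all _ fun ω => hC _ (hgs ω)))

section StrictAntiOn

variable {f : ℝ → ℝ} {a b l c : ℝ}

lemma StrictAntiOn.lt_of_tendsto_nhdsWithin_left (hf : StrictAntiOn f (Ioo a b))
    (hl : Tendsto f (𝓝[Ioo a b] a) (𝓝 l)) (hc : c ∈ Ioo a b) : f c < l := by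
  have hm : (a + c) / 2 ∈ Ioo a b := ⟨by linarith [hc.1], by linarith [hc.1, hc.2]⟩
  have := left_nhdsWithin_Ioo_neBot (hc.1.trans hc.2)
  have hml : f ((a + c) / 2) ≤ l := by
    refine ge_of_tendsto hl ?_
    filter_upwards [mem_nhdsWithin_of_mem_nhds (Iio_mem_nhds hm.1), self_mem_nhdsWithin]
      with z hzm hz
    exact (hf hz hm hzm).le
  exact (hf hm hc (by linarith [hc.1])).trans_le hml

lemma StrictAntiOn.lt_of_tendsto_nhdsWithin_right (hf : StrictAntiOn f (Ioo a b))
    (hl : Tendsto f (𝓝[Ioo a b] b) (𝓝 l)) (hc : c ∈ Ioo a b) : l < f c := by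
  have hm : (c + b) / 2 ∈ Ioo a b := ⟨by linarith [hc.1, hc.2], by linarith [hc.2]⟩
  have := right_nhdsWithin_Ioo_neBot (hc.1.trans hc.2)
  have hlm : l ≤ f ((c + b) / 2) := by
    refine le_of_tendsto hl ?_
    filter_upwards [mem_nhdsWithin_of_mem_nhds (Ioi_mem_nhds hm.2), self_mem_nhdsWithin]
      with z hzm hz
    exact (hf hm hz hzm).le
  exact hlm.trans_lt (hf hc hm (by linarith [hc.2]))

end StrictAntiOn

section MeanValue

variable {f f' : ℝ → ℝ} {a b η : ℝ}

lemma sub_mul_lt_sub_mul_of_lt_deriv (hab : a < b) (hf : ContinuousOn f (Icc a b))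
    (hf' : ∀ x ∈ Ioo a b, HasDerivAt f (f' x) x) (hη : ∀ x ∈ Ioo a b, η < f' x) :
    f a - η * a < f b - η * b := by
  obtain ⟨c, hc, hslope⟩ := exists_hasDerivAt_eq_slope f f' hab hf hf'
  have h := hη c hc
  rw [hslope, lt_div_iff₀ (sub_pos.2 hab)] at h
  linarith

lemma sub_mul_lt_sub_mul_of_deriv_lt (hab : a < b) (hf : ContinuousOn f (Icc a b))
    (hf' : ∀ x ∈ Ioo a b, HasDerivAt f (f' x) x) (hη : ∀ x ∈ Ioo a b, f' x < η) :
    f b - η * b < f a - η * a := by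
  have h := sub_mul_lt_sub_mul_of_lt_deriv (f := -f) (f' := -f') (η := -η) hab hf.neg
    (fun x hx => (hf' x hx).neg) fun x hx => neg_lt_neg (hη x hx)
  simp only [Pi.neg_apply, neg_mul] at h
  linarith

end MeanValue

section InverseMarginalUtility

variable {U U' I : ℝ → ℝ} {K u0 uK η c : ℝ}

lemma lt_deriv_of_lt_inverse (hU'anti : StrictAntiOn U' (Ioo 0 K))
    (huK : Tendsto U' (𝓝[Ioo 0 K] K) (𝓝 uK))
    (hIrange : ∀ y, 0 < y → I y ∈ Icc 0 K) (hI0 : ∀ y, u0 ≤ y → I y = 0)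
    (hIinv : ∀ y ∈ Ioo uK u0, U' (I y) = y) (hIanti : StrictAntiOn I (Icc uK u0))
    (hη : 0 < η) (hc : c ∈ Ioo 0 K) (hcI : c < I η) : η < U' c := by
  rcases le_or_gt η uK with hηK | hKη
  · exact hηK.trans_lt (hU'anti.lt_of_tendsto_nhdsWithin_right huK hc)
  have hη0 : η < u0 := by
    by_contra! h
    linarith [hI0 η h, hc.1]
  -- `hIrange` needs a positive argument and `uK` may be `0`, hence the detour through `η₁`.
  set η₁ := max uK (η / 2)
  have hη₁ : η₁ ∈ Icc uK u0 := ⟨le_max_left _ _, max_le (hKη.trans hη0).le (by linarith)⟩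
  have hIK : I η < K :=
    (hIanti hη₁ ⟨hKη.le, hη0.le⟩ (max_lt hKη (by linarith))).trans_le
      (hIrange η₁ (by positivity)).2
  calc η = U' (I η) := (hIinv η ⟨hKη, hη0⟩).symm
    _ < U' c := hU'anti hc ⟨hc.1.trans hcI, hIK⟩ hcI

lemma deriv_lt_of_inverse_lt (hU'anti : StrictAntiOn U' (Ioo 0 K))
    (hu0 : Tendsto U' (𝓝[Ioo 0 K] 0) (𝓝 u0))
    (hI0 : ∀ y, u0 ≤ y → I y = 0) (hIK : ∀ y, 0 < y → y ≤ uK → I y = K)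
    (hIinv : ∀ y ∈ Ioo uK u0, U' (I y) = y) (hIanti : StrictAntiOn I (Icc uK u0))
    (hη : 0 < η) (hc : c ∈ Ioo 0 K) (hIc : I η < c) : U' c < η := by
  rcases le_or_gt u0 η with hη0 | hη0
  · exact (hU'anti.lt_of_tendsto_nhdsWithin_left hu0 hc).trans_le hη0
  have hKη : uK < η := by
    by_contra! h
    linarith [hIK η hη h, hc.2]
  have hIpos : 0 < I η := by
    simpa [hI0 u0 le_rfl] using
      hIanti ⟨hKη.le, hη0.le⟩ ⟨(hKη.trans hη0).le, le_rfl⟩ hη0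
  calc U' c < U' (I η) := hU'anti ⟨hIpos, hIc.trans hc.2⟩ hc hIc
    _ = η := hIinv η ⟨hKη, hη0⟩

lemma sub_mul_lt_of_ne_inverse (hUcont : ContinuousOn U (Ici 0))
    (hUderiv : ∀ x ∈ Ioo 0 K, HasDerivAt U (U' x) x) (hU'anti : StrictAntiOn U' (Ioo 0 K))
    (hu0 : Tendsto U' (𝓝[Ioo 0 K] 0) (𝓝 u0)) (huK : Tendsto U' (𝓝[Ioo 0 K] K) (𝓝 uK))
    (hIrange : ∀ y, 0 < y → I y ∈ Icc 0 K) (hI0 : ∀ y, u0 ≤ y → I y = 0)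
    (hIK : ∀ y, 0 < y → y ≤ uK → I y = K) (hIinv : ∀ y ∈ Ioo uK u0, U' (I y) = y)
    (hIanti : StrictAntiOn I (Icc uK u0)) (hη : 0 < η) {b : ℝ} (hb : b ∈ Icc 0 K)
    (hne : b ≠ I η) : U b - η * b < U (I η) - η * I η := by
  have hI := hIrange η hη
  rcases hne.lt_or_gt with hlt | hgt
  · exact sub_mul_lt_sub_mul_of_lt_deriv hlt (hUcont.mono fun x hx => hb.1.trans hx.1)
      (fun x hx => hUderiv x (Ioo_subset_Ioo hb.1 hI.2 hx)) fun x hx =>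
        lt_deriv_of_lt_inverse hU'anti huK hIrange hI0 hIinv hIanti hη
          (Ioo_subset_Ioo hb.1 hI.2 hx) hx.2
  · exact sub_mul_lt_sub_mul_of_deriv_lt hgt (hUcont.mono fun x hx => hI.1.trans hx.1)
      (fun x hx => hUderiv x (Ioo_subset_Ioo hI.1 hb.2 hx)) fun x hx =>
        deriv_lt_of_inverse_lt hU'anti hu0 hI0 hIK hIinv hIanti hη
          (Ioo_subset_Ioo hI.1 hb.2 hx) hx.1

end InverseMarginalUtility

theorem stmt_3_general
    {Ω : Type*} [MeasurableSpace Ω] (P : Measure Ω) [IsProbabilityMeasure P]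
    (K : ℝ)
    (U U' I : ℝ → ℝ) (u0 uK : ℝ)
    -- U is a good truncated utility function with effective domain [0,K]:
    (hUcont : ContinuousOn U (Ici 0))
    (hUderiv : ∀ x ∈ Ioo 0 K, HasDerivAt U (U' x) x)
    (hU'anti : StrictAntiOn U' (Ioo 0 K))
    (hu0 : Tendsto U' (nhdsWithin 0 (Ioo 0 K)) (nhds u0))
    (huK : Tendsto U' (nhdsWithin K (Ioo 0 K)) (nhds uK))
    -- I : (0,∞) → [0,K] is the inverse marginal utility:
    (hIrange : ∀ y, 0 < y → I y ∈ Icc 0 K)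
    (hI0 : ∀ y, u0 ≤ y → I y = 0)
    (hIK : ∀ y, 0 < y → y ≤ uK → I y = K)
    (hIinv : ∀ y ∈ Ioo uK u0, U' (I y) = y)
    (hIanti : StrictAntiOn I (Icc uK u0))
    (hIcont : ContinuousOn I (Ioi 0))
    -- H is a positive integrable random variable:
    (H : Ω → ℝ) (hHmeas : Measurable H) (hHpos : ∀ ω, 0 < H ω)
    (hHint : Integrable H P)
    (y : ℝ) (hy : 0 < y)
    -- B is a measurable random variable with values in [0,K]:
    (B : Ω → ℝ) (hBmeas : Measurable B) (hBrange : ∀ ω, B ω ∈ Icc 0 K) :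
    (∫ ω, (U (B ω) - y * H ω * B ω) ∂P
        ≤ ∫ ω, (U (I (y * H ω)) - y * H ω * I (y * H ω)) ∂P) ∧
    ((∫ ω, (U (B ω) - y * H ω * B ω) ∂P
        = ∫ ω, (U (I (y * H ω)) - y * H ω * I (y * H ω)) ∂P)
      ↔ B =ᵐ[P] fun ω => I (y * H ω)) := by
  have hη : ∀ ω, 0 < y * H ω := fun ω => mul_pos hy (hHpos ω)
  have hYmeas : Measurable fun ω => I (y * H ω) :=
    hIcont.measurable_comp_of_mapsTo (hHmeas.const_mul y) hη
  have hint : ∀ g : Ω → ℝ, Measurable g → (∀ ω, g ω ∈ Icc 0 K) →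
      Integrable (fun ω => U (g ω) - y * H ω * g ω) P := fun g hg hgK =>
    integrable_sub_mul_of_mem_isCompact isCompact_Icc (hUcont.mono Icc_subset_Ici_self)
      (hHint.const_mul y) hg hgK
  have hlt : ∀ ω, B ω ≠ I (y * H ω) →
      U (B ω) - y * H ω * B ω < U (I (y * H ω)) - y * H ω * I (y * H ω) := fun ω =>
    sub_mul_lt_of_ne_inverse hUcont hUderiv hU'anti hu0 huK hIrange hI0 hIK hIinv hIanti
      (hη ω) (hBrange ω)
  have hle : ∀ ω, U (B ω) - y * H ω * B ω ≤ U (I (y * H ω)) - y * H ω * I (y * H ω) :=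
    fun ω => (eq_or_ne (B ω) (I (y * H ω))).elim (fun h => by rw [h]) fun h => (hlt ω h).le
  have hB := hint B hBmeas hBrange
  have hY := hint _ hYmeas fun ω => hIrange _ (hη ω)
  refine ⟨integral_mono hB hY hle, ?_⟩
  rw [integral_eq_iff_of_ae_le hB hY (ae_of_all _ hle)]
  refine eventually_congr (ae_of_all _ fun ω => ⟨fun h => ?_, fun h => by simp only [h]⟩)
  by_contra hne
  exact (hlt ω hne).ne h

theorem stmt_3
    {Ω : Type*} [MeasurableSpace Ω] (P : Measure Ω) [IsProbabilityMeasure P]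
    (K : ℝ) (hK : 0 < K)
    (U U' I : ℝ → ℝ) (u0 uK : ℝ)
    -- U is a good truncated utility function with effective domain [0,K]:
    (hUcont : ContinuousOn U (Ici 0))
    (hUderiv : ∀ x ∈ Ioo 0 K, HasDerivAt U (U' x) x)
    (hU'cont : ContinuousOn U' (Ioo 0 K))
    (hU'pos : ∀ x ∈ Ioo 0 K, 0 < U' x)
    (hU'anti : StrictAntiOn U' (Ioo 0 K))
    (hu0 : Tendsto U' (nhdsWithin 0 (Ioo 0 K)) (nhds u0))
    (huK : Tendsto U' (nhdsWithin K (Ioo 0 K)) (nhds uK))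
    (hUtrunc : ∀ x, K ≤ x → U x = U K)
    -- I : (0,∞) → [0,K] is the inverse marginal utility:
    (hIrange : ∀ y, 0 < y → I y ∈ Icc 0 K)
    (hI0 : ∀ y, u0 ≤ y → I y = 0)
    (hIK : ∀ y, 0 < y → y ≤ uK → I y = K)
    (hIinv : ∀ y ∈ Ioo uK u0, U' (I y) = y)
    (hIanti : StrictAntiOn I (Icc uK u0))
    (hIcont : ContinuousOn I (Ioi 0))
    -- H is a positive integrable random variable:
    (H : Ω → ℝ) (hHmeas : Measurable H) (hHpos : ∀ ω, 0 < H ω)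
    (hHint : Integrable H P)
    (y : ℝ) (hy : 0 < y)
    -- B is a measurable random variable with values in [0,K]:
    (B : Ω → ℝ) (hBmeas : Measurable B) (hBrange : ∀ ω, B ω ∈ Icc 0 K) :
    (∫ ω, (U (B ω) - y * H ω * B ω) ∂P
        ≤ ∫ ω, (U (I (y * H ω)) - y * H ω * I (y * H ω)) ∂P) ∧
    ((∫ ω, (U (B ω) - y * H ω * B ω) ∂P
        = ∫ ω, (U (I (y * H ω)) - y * H ω * I (y * H ω)) ∂P)
      ↔ B =ᵐ[P] fun ω => I (y * H ω)) :=
  stmt_3_general P K U U' I u0 uK hUcont hUderiv hU'anti hu0 huK hIrange hI0 hIK hIinv hIanti hIcont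
    H hHmeas hHpos hHint y hy B hBmeas hBrange
end

section
/- For all real numbers u and λ and every ε ∈ (0,1) one has δ(u + ελ) − δ(u) ≤ ε·δ^u(λ), where δ^u(λ) := −δ(u) if λ = −u and δ^u(λ) := δ(λ) otherwise. (Inequality (5.16).) -/
/-! For a sublinear `δ`, subadditivity gives `δ(u + ελ) ≤ δ(u) + ε δ(λ)`. When `λ = -u` one does
better: `u + ελ = (1 - ε) u`, so positive homogeneity gives `δ(u + ελ) = (1 - ε) δ(u)` exactly.
The support function of `[0,1]`, `x ↦ max (-x) 0`, is sublinear. -/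

def IsSublinear {E : Type*} [AddCommGroup E] [Module ℝ E] (f : E → ℝ) : Prop :=
  (∀ x y, f (x + y) ≤ f x + f y) ∧ ∀ (c : ℝ) (x : E), 0 ≤ c → f (c • x) = c * f x

theorem IsSublinear.sub_le {E : Type*} [AddCommGroup E] [DecidableEq E] [Module ℝ E] {f : E → ℝ}
    (hf : IsSublinear f) {u l : E} {ε : ℝ} (hε₀ : 0 ≤ ε) (hε₁ : ε ≤ 1) :
    f (u + ε • l) - f u ≤ ε * (if l = -u then -f u else f l) := by
  obtain ⟨hadd, hhom⟩ := hf
  split_ifs with hl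
  · have hcomb : u + ε • l = (1 - ε) • u := by
      rw [hl, smul_neg, sub_smul, one_smul, sub_eq_add_neg]
    rw [hcomb, hhom _ _ (sub_nonneg.mpr hε₁)]
    linarith
  · linarith [hadd u (ε • l), hhom ε l hε₀]

theorem isSublinear_ite_nonneg :
    IsSublinear (fun x : ℝ => if 0 ≤ x then 0 else -x) := by
  refine ⟨fun x y => ?_, fun c x hc => ?_⟩
  · dsimp only
    split_ifs <;> linarith
  · simp only [smul_eq_mul]
    rcases hc.eq_or_lt with rfl | hc
    · simp
    · simp only [mul_nonneg_iff_of_pos_left hc]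
      split_ifs <;> ring

theorem stmt_6 (δ : ℝ → ℝ) (hδ : ∀ x : ℝ, δ x = if 0 ≤ x then 0 else -x)
    (u l ε : ℝ) (hε : ε ∈ Set.Ioo (0 : ℝ) 1) :
    δ (u + ε * l) - δ u ≤ ε * (if l = -u then -δ u else δ l) := by
  obtain rfl : δ = fun x => if 0 ≤ x then 0 else -x := funext hδ
  exact isSublinear_ite_nonneg.sub_le hε.1.le hε.2.le
end

section
/- Let (E,ℰ,μ) be a finite measure space, g : E → (0,∞) a μ-integrable measurable function, and u, α : E → ℝ bounded measurable functions. For a bounded measurable λ : E → ℝ define δ^u(λ)(e) := −δ(u(e)) if λ(e) = −u(e) and δ^u(λ)(e) := δ(λ(e)) otherwise. Suppose that for every bounded measurable λ : E → ℝ one has ∫_E g(e)·[δ^u(λ)(e) + α(e)·λ(e)] μ(de) ≥ 0. Then for μ-almost every e ∈ E one has α(e) ∈ [0,1] and δ(u(e)) + α(e)·u(e) = 0. (The core analytic step, (5.23)–(5.24), in the proof of Theorem 5.2, which shows that the candidate pseudo-reinsurance policy α* is a true reinsurance policy satisfying the complementary slackness condition.) -/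
open Set MeasureTheory
open scoped ENNReal

/-!
Here `δ x = x⁻`, and `a ∈ [0,1]` iff `x⁻ + a x ≥ 0` for all `x` (it suffices to test `x = ±1`).
The exceptional value `-δ(u e) ≤ 0 ≤ δ(λ e)`, so the hypothesis still holds with `δ^u(λ)` replaced
by `δ(λ)`. Testing `λ = c · 𝟙_S` for all measurable `S` gives `g (c⁻ + α c) ≥ 0` a.e., hence
`α ∈ [0,1]` a.e. by taking `c = ±1`. Then `u⁻ + α u ≥ 0` a.e., while `λ = -u` (for which `δ^u(λ)`
is `-δ(u)` everywhere) gives `∫ g (u⁻ + α u) ≤ 0`, so `u⁻ + α u = 0` a.e. since `g > 0`.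
-/

lemma negPart_add_mul_nonneg {a : ℝ} (ha : a ∈ Icc 0 1) (x : ℝ) : 0 ≤ x⁻ + a * x := by
  have hx : x⁻ + a * x = a * x⁺ + (1 - a) * x⁻ := by
    linear_combination a * (posPart_sub_negPart x).symm
  rw [hx]
  exact add_nonneg (mul_nonneg ha.1 (posPart_nonneg x))
    (mul_nonneg (sub_nonneg.2 ha.2) (negPart_nonneg x))

lemma negPart_le_abs (x : ℝ) : x⁻ ≤ |x| := by
  rw [negPart_def]
  exact sup_le (neg_le_abs x) (abs_nonneg x)

lemma mem_Icc_of_negPart_add_mul_nonneg {a : ℝ} (h₁ : 0 ≤ (1 : ℝ)⁻ + a * 1)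
    (h₂ : 0 ≤ (-1 : ℝ)⁻ + a * -1) : a ∈ Icc 0 1 := by
  norm_num at h₁ h₂
  exact ⟨h₁, by linarith⟩

section

variable {E : Type*} [MeasurableSpace E] {μ : Measure E} {g u α : E → ℝ}

lemma memLp_top_of_abs_le {f : E → ℝ} (hf : Measurable f) (hC : ∃ C, ∀ e, |f e| ≤ C) :
    MemLp f ∞ μ :=
  let ⟨C, hC⟩ := hC
  memLp_top_of_bound hf.aestronglyMeasurable C (ae_of_all _ hC)

lemma integral_mul_negPart_add_mul_nonneg (hg : Integrable g μ) (hg0 : ∀ e, 0 ≤ g e)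
    (hu : Measurable u) (hα : MemLp α ∞ μ)
    (hpos : ∀ l : E → ℝ, Measurable l → (∃ C, ∀ e, |l e| ≤ C) →
      0 ≤ ∫ e, g e * ((if l e = -u e then -(u e)⁻ else (l e)⁻) + α e * l e) ∂μ)
    (l : E → ℝ) (hl : Measurable l) (hlC : ∃ C, ∀ e, |l e| ≤ C) :
    0 ≤ ∫ e, g e * ((l e)⁻ + α e * l e) ∂μ := by
  have hl' : MemLp l ∞ μ := memLp_top_of_abs_le hl hlC
  have hlα : MemLp (fun e => α e * l e) ∞ μ := hl'.mul hα
  set δu := fun e => if l e = -u e then -(u e)⁻ else (l e)⁻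
  have hδu_le : ∀ e, δu e ≤ (l e)⁻ := fun e => by
    dsimp only [δu]
    split_ifs <;> linarith [negPart_nonneg (u e), negPart_nonneg (l e)]
  -- on the exceptional set `u = -l`, so `|δu| ≤ |l|`
  have hδu_abs : ∀ e, |δu e| ≤ |l e| := fun e => by
    dsimp only [δu]
    split_ifs with h
    · rw [abs_neg, abs_of_nonneg (negPart_nonneg _), show u e = -l e by linarith, ← abs_neg (l e)]
      exact negPart_le_abs _
    · rw [abs_of_nonneg (negPart_nonneg _)]
      exact negPart_le_abs _
  have hδu_meas : Measurable δu :=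
    Measurable.ite (measurableSet_eq_fun hl hu.neg) (by fun_prop) (by fun_prop)
  have hδu : MemLp δu ∞ μ := hl'.norm.of_le hδu_meas.aestronglyMeasurable
    (ae_of_all _ fun e => by simpa using hδu_abs e)
  refine (hpos l hl hlC).trans (integral_mono (hg.mul_of_top_left (hδu.add hlα))
    (hg.mul_of_top_left (hl'.neg_part.add hlα)) fun e => ?_)
  exact mul_le_mul_of_nonneg_left (add_le_add_left (hδu_le e) _) (hg0 e)

lemma ae_negPart_add_mul_nonneg (hg : Integrable g μ) (hg0 : ∀ e, 0 < g e) (hα : MemLp α ∞ μ)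
    (h : ∀ l : E → ℝ, Measurable l → (∃ C, ∀ e, |l e| ≤ C) →
      0 ≤ ∫ e, g e * ((l e)⁻ + α e * l e) ∂μ) (c : ℝ) :
    ∀ᵐ e ∂μ, 0 ≤ c⁻ + α e * c := by
  have hαc : MemLp (fun e => c⁻ + α e * c) ∞ μ :=
    (memLp_top_const (c⁻)).add (hα.mul_const c)
  have hint : Integrable (fun e => g e * (c⁻ + α e * c)) μ := hg.mul_of_top_left hαc
  have hS : ∀ S, MeasurableSet S → μ S < ∞ → 0 ≤ ∫ e in S, g e * (c⁻ + α e * c) ∂μ := by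
    intro S hS _
    rw [← integral_indicator hS]
    convert h (S.indicator fun _ => c) (measurable_const.indicator hS)
      ⟨|c|, fun e => by by_cases he : e ∈ S <;> simp [he]⟩ using 3 with e
    by_cases he : e ∈ S <;> simp [he]
  filter_upwards [ae_nonneg_of_forall_setIntegral_nonneg hint hS] with e he
  exact (mul_nonneg_iff_of_pos_left (hg0 e)).1 he

lemma ae_negPart_add_mul_eq_zero (hg : Integrable g μ) (hg0 : ∀ e, 0 < g e) (hu : MemLp u ∞ μ)
    (hα : MemLp α ∞ μ) (hα01 : ∀ᵐ e ∂μ, α e ∈ Icc 0 1)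
    (hint : ∫ e, g e * ((u e)⁻ + α e * u e) ∂μ ≤ 0) :
    ∀ᵐ e ∂μ, (u e)⁻ + α e * u e = 0 := by
  have hnonneg : 0 ≤ᵐ[μ] fun e => g e * ((u e)⁻ + α e * u e) := by
    filter_upwards [hα01] with e he
    exact mul_nonneg (hg0 e).le (negPart_add_mul_nonneg he _)
  have hzero := (integral_eq_zero_iff_of_nonneg_ae hnonneg
    (hg.mul_of_top_left (hu.neg_part.add (hu.mul hα)))).1
      (le_antisymm hint (integral_nonneg_of_ae hnonneg))
  filter_upwards [hzero] with e he
  exact (mul_eq_zero.1 he).resolve_left (hg0 e).ne'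

end

theorem stmt_7_general
    {E : Type*} [MeasurableSpace E] (μ : Measure E)
    (δ : ℝ → ℝ) (hδ : ∀ x : ℝ, δ x = if 0 ≤ x then 0 else -x)
    (g : E → ℝ) (hgpos : ∀ e, 0 < g e)
    (hgint : Integrable g μ)
    (u : E → ℝ) (humeas : Measurable u) (hubd : ∃ C, ∀ e, |u e| ≤ C)
    (α : E → ℝ) (hαmeas : Measurable α) (hαbd : ∃ C, ∀ e, |α e| ≤ C)
    (hpos : ∀ l : E → ℝ, Measurable l → (∃ C, ∀ e, |l e| ≤ C) →
      0 ≤ ∫ e, g e * ((if l e = -u e then -δ (u e) else δ (l e)) + α e * l e) ∂μ) :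
    ∀ᵐ e ∂μ, α e ∈ Icc (0 : ℝ) 1 ∧ δ (u e) + α e * u e = 0 := by
  obtain rfl : δ = fun x => x⁻ := funext fun x => by
    rw [hδ, negPart_eq_ite]
    split_ifs <;> linarith
  have hu := memLp_top_of_abs_le (μ := μ) humeas hubd
  have hα := memLp_top_of_abs_le (μ := μ) hαmeas hαbd
  have hpos_negPart :=
    integral_mul_negPart_add_mul_nonneg hgint (fun e => (hgpos e).le) humeas hα hpos
  have hα01 : ∀ᵐ e ∂μ, α e ∈ Icc 0 1 := by
    filter_upwards [ae_negPart_add_mul_nonneg hgint hgpos hα hpos_negPart 1,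
      ae_negPart_add_mul_nonneg hgint hgpos hα hpos_negPart (-1)] with e h₁ h₂
    exact mem_Icc_of_negPart_add_mul_nonneg h₁ h₂
  have hslack : ∫ e, g e * ((u e)⁻ + α e * u e) ∂μ ≤ 0 := by
    have := hpos (fun e => -u e) humeas.neg (hubd.imp fun C hC e => (abs_neg _).trans_le (hC e))
    simp only [if_true] at this
    rw [← neg_nonneg, ← integral_neg]
    convert this using 3 with e
    ring
  exact hα01.and (ae_negPart_add_mul_eq_zero hgint hgpos hu hα hα01 hslack)

theorem stmt_7
    {E : Type*} [MeasurableSpace E] (μ : Measure E) [IsFiniteMeasure μ]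
    (δ : ℝ → ℝ) (hδ : ∀ x : ℝ, δ x = if 0 ≤ x then 0 else -x)
    (g : E → ℝ) (hgmeas : Measurable g) (hgpos : ∀ e, 0 < g e)
    (hgint : Integrable g μ)
    (u : E → ℝ) (humeas : Measurable u) (hubd : ∃ C, ∀ e, |u e| ≤ C)
    (α : E → ℝ) (hαmeas : Measurable α) (hαbd : ∃ C, ∀ e, |α e| ≤ C)
    (hpos : ∀ l : E → ℝ, Measurable l → (∃ C, ∀ e, |l e| ≤ C) →
      0 ≤ ∫ e, g e * ((if l e = -u e then -δ (u e) else δ (l e)) + α e * l e) ∂μ) :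
    ∀ᵐ e ∂μ, α e ∈ Icc (0 : ℝ) 1 ∧ δ (u e) + α e * u e = 0 :=
  stmt_7_general μ δ hδ g hgpos hgint u humeas hubd α hαmeas hαbd hpos
end

section
/- Let (Ω,𝓕,P) be a probability space, T > 0, K > 0, and let H : [0,T]×Ω → (0,∞) be jointly measurable, with H_t := H(t,·) and H_T := H(T,·), such that E[H_T] < ∞. Let x̄₁ : [0,T] → [0,∞) be measurable with E∫₀^T H_t·x̄₁(t) dt < ∞. Let I₁ : [0,T]×(0,∞) → [0,∞) be measurable, such that for each t the map y ↦ I₁(t,y) is continuous and nonincreasing with lim_{y→0+} I₁(t,y) = +∞ and lim_{y→∞} I₁(t,y) = x̄₁(t); let I₂ : (0,∞) → [0,K] be continuous and nonincreasing with lim_{y→∞} I₂(y) = 0. Define 𝒳(y) := E[H_T·I₂(y·H_T)] + E∫₀^T H_t·I₁(t, y·H_t) dt for y > 0, and assume 𝒳(y) < ∞ for every y > 0. Then 𝒳 is nonincreasing and continuous on (0,∞), lim_{y→0+} 𝒳(y) = +∞, and lim_{y→∞} 𝒳(y) = E∫₀^T H_t·x̄₁(t) dt. (The properties (6.10)–(6.11)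 of the function 𝒳, which guarantee that for every x > lim_{y→∞}𝒳(y) there exists y > 0 with 𝒳(y) = x, defining the Lagrange multiplier 𝒴(x) in the utility optimization problem.) -/
/-!
Both summands of `𝒳(y)` integrate `h · I(y h)` with `h > 0` and `I` nonincreasing on `(0, ∞)`, so
they are nonincreasing in `y`. Hence on `[y/2, ∞)` (resp. `[1, ∞)`) the integrand is dominated by
its value at `y/2` (resp. `1`), which is integrable because `𝒳` is finite: dominated convergence
gives continuity, and the limit at `∞` together with its finiteness. As `y ↓ 0` the integrand of the
second summand increases to `∞` on `Ω × [0,T]`, so monotone convergence gives `𝒳(y) → ∞`.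
-/

open Set Filter MeasureTheory
open scoped Topology ENNReal

theorem tendsto_toReal_atTop_of_tendsto_top {β : Type*} {l : Filter β} {φ : β → ℝ≥0∞}
    (hfin : ∀ᶠ y in l, φ y ≠ ∞) (h : Tendsto φ l (𝓝 ∞)) :
    Tendsto (fun y => (φ y).toReal) l atTop := by
  rw [← ENNReal.tendsto_ofReal_nhds_top]
  exact h.congr' (hfin.mono fun _ hy => (ENNReal.ofReal_toReal hy).symm)

theorem antitoneOn_continuousOn_tendsto_of_eqOn_toReal {X : ℝ → ℝ} {φ : ℝ → ℝ≥0∞} {L : ℝ≥0∞}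
    (hX : EqOn X (fun y => (φ y).toReal) (Ioi 0)) (hfin : ∀ y, 0 < y → φ y ≠ ∞)
    (h_anti : AntitoneOn φ (Ioi 0)) (h_cont : ∀ y, 0 < y → ContinuousAt φ y)
    (h_zero : Tendsto φ (𝓝[>] 0) (𝓝 ∞)) (h_top : Tendsto φ atTop (𝓝 L)) (hL : L ≠ ∞) :
    AntitoneOn X (Ioi 0) ∧ ContinuousOn X (Ioi 0) ∧ Tendsto X (𝓝[>] 0) atTop ∧
      Tendsto X atTop (𝓝 L.toReal) := by
  refine ⟨fun y hy z hz hyz => ?_, fun y hy => ?_, ?_, ?_⟩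
  · rw [hX hy, hX hz]
    exact ENNReal.toReal_mono (hfin y hy) (h_anti hy hz hyz)
  · refine (ContinuousAt.continuousWithinAt ?_).congr hX (hX hy)
    exact (ENNReal.continuousAt_toReal (hfin y hy)).comp (h_cont y hy)
  · refine (tendsto_toReal_atTop_of_tendsto_top ?_ h_zero).congr' ?_
    · exact eventually_nhdsWithin_of_forall hfin
    · exact (eventually_nhdsWithin_of_forall fun y hy => (hX hy).symm)
  · refine ((ENNReal.tendsto_toReal hL).comp h_top).congr' ?_
    exact (eventually_gt_atTop 0).mono fun y hy => (hX hy).symm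

section AntitoneFamily

variable {α : Type*} [MeasurableSpace α] {μ : Measure α} {F : ℝ → α → ℝ≥0∞}

theorem antitoneOn_lintegral {s : Set ℝ} (hF : ∀ x, AntitoneOn (F · x) s) :
    AntitoneOn (fun y => ∫⁻ x, F y x ∂μ) s :=
  fun _ hy _ hz hyz => lintegral_mono fun x => hF x hy hz hyz

theorem tendsto_lintegral_of_antitoneOn_Ici {l : Filter ℝ} [l.IsCountablyGenerated] {a : ℝ}
    {g : α → ℝ≥0∞} (hF_meas : ∀ y, Measurable (F y)) (hF_anti : ∀ x, AntitoneOn (F · x) (Ici a))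
    (hl : ∀ᶠ y in l, a ≤ y) (ha : ∫⁻ x, F a x ∂μ ≠ ∞)
    (h_lim : ∀ᵐ x ∂μ, Tendsto (F · x) l (𝓝 (g x))) :
    Tendsto (fun y => ∫⁻ x, F y x ∂μ) l (𝓝 (∫⁻ x, g x ∂μ)) :=
  tendsto_lintegral_filter_of_dominated_convergence (F a) (.of_forall hF_meas)
    (hl.mono fun _ hy => .of_forall fun x => hF_anti x self_mem_Ici hy hy) ha h_lim

theorem tendsto_lintegral_nhdsGT_of_antitoneOn {a : ℝ} {g : α → ℝ≥0∞}
    (hF_meas : ∀ y, Measurable (F y)) (hF_anti : ∀ x, AntitoneOn (F · x) (Ioi a))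
    (h_lim : ∀ᵐ x ∂μ, Tendsto (F · x) (𝓝[>] a) (𝓝 (g x))) :
    Tendsto (fun y => ∫⁻ x, F y x ∂μ) (𝓝[>] a) (𝓝 (∫⁻ x, g x ∂μ)) := by
  set u : ℕ → ℝ := fun n => a + 1 / (n + 1)
  have hu_mem : ∀ n, u n ∈ Ioi a := fun n => lt_add_of_pos_right a Nat.one_div_pos_of_nat
  have hu : Tendsto u atTop (𝓝[>] a) := by
    refine tendsto_nhdsWithin_iff.2 ⟨?_, .of_forall hu_mem⟩
    simpa only [add_zero] using tendsto_one_div_add_atTop_nhds_zero_nat.const_add a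
  have hu_anti : Antitone u := fun m n hmn => by dsimp only [u]; gcongr
  have h_sup := (antitoneOn_lintegral (μ := μ) hF_anti).tendsto_nhdsGT (OrderTop.bddAbove _)
  have h_seq : Tendsto (fun n => ∫⁻ x, F (u n) x ∂μ) atTop (𝓝 (∫⁻ x, g x ∂μ)) :=
    lintegral_tendsto_of_tendsto_of_monotone (fun n => (hF_meas _).aemeasurable)
      (.of_forall fun x m n hmn => hF_anti x (hu_mem n) (hu_mem m) (hu_anti hmn))
      (h_lim.mono fun x hx => hx.comp hu)
  rwa [tendsto_nhds_unique (h_sup.comp hu) h_seq] at h_sup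

end AntitoneFamily

section ScaledIntegrand

variable {c : ℝ} {φ : ℝ → ℝ}

theorem antitoneOn_ofReal_mul_comp_mul (hc : 0 < c) (hφ : AntitoneOn φ (Ioi 0)) :
    AntitoneOn (fun y => ENNReal.ofReal (c * φ (y * c))) (Ioi 0) := fun _ hy _ hz hyz =>
  ENNReal.ofReal_le_ofReal <| mul_le_mul_of_nonneg_left
    (hφ (mul_pos hy hc) (mul_pos hz hc) (mul_le_mul_of_nonneg_right hyz hc.le)) hc.le

theorem continuousAt_ofReal_mul_comp_mul (hc : 0 < c) (hφ : ContinuousOn φ (Ioi 0)) {y : ℝ}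
    (hy : 0 < y) : ContinuousAt (fun y => ENNReal.ofReal (c * φ (y * c))) y := by
  have hφy : ContinuousAt φ (y * c) := hφ.continuousAt (Ioi_mem_nhds (mul_pos hy hc))
  exact ENNReal.continuous_ofReal.continuousAt.comp
    (continuousAt_const.mul (hφy.comp (f := (· * c)) (continuousAt_id.mul continuousAt_const)))

theorem tendsto_ofReal_mul_comp_mul_atTop (hc : 0 < c) {L : ℝ} (hφ : Tendsto φ atTop (𝓝 L)) :
    Tendsto (fun y => ENNReal.ofReal (c * φ (y * c))) atTop (𝓝 (ENNReal.ofReal (c * L))) :=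
  ENNReal.tendsto_ofReal <| (hφ.comp (tendsto_id.atTop_mul_const hc)).const_mul c

theorem tendsto_ofReal_mul_comp_mul_nhdsGT_zero (hc : 0 < c) (hφ : Tendsto φ (𝓝[>] 0) atTop) :
    Tendsto (fun y => ENNReal.ofReal (c * φ (y * c))) (𝓝[>] 0) (𝓝 ∞) := by
  have h_scale : Tendsto (· * c) (𝓝[>] (0 : ℝ)) (𝓝[>] 0) := by
    refine tendsto_nhdsWithin_iff.2 ⟨?_, eventually_nhdsWithin_of_forall fun y hy => mul_pos hy hc⟩
    simpa using (continuous_mul_const c).tendsto 0 |>.mono_left nhdsWithin_le_nhds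
  exact ENNReal.tendsto_ofReal_nhds_top.2 ((hφ.comp h_scale).const_mul_atTop hc)

end ScaledIntegrand

section DemandCost

variable {α : Type*} [MeasurableSpace α] {μ : Measure α} {h : α → ℝ} {f : α → ℝ → ℝ}

/-- The first summand of `𝒳(y)` is `demandCost P H_T I₂ y`; for fixed `ω`, the inner time
integral of the second one is `demandCost (dt on [0,T]) H_·(ω) I₁ y`. -/
noncomputable def demandCost (μ : Measure α) (h : α → ℝ) (f : α → ℝ → ℝ) (y : ℝ) : ℝ≥0∞ :=
  ∫⁻ x, ENNReal.ofReal (h x * f x (y * h x)) ∂μ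

theorem measurable_demandCost_integrand (hh : Measurable h)
    (hf : Measurable fun p : α × ℝ => f p.1 p.2) (y : ℝ) :
    Measurable fun x => ENNReal.ofReal (h x * f x (y * h x)) :=
  ENNReal.measurable_ofReal.comp (hh.mul (hf.comp (measurable_id.prodMk (hh.const_mul y))))

theorem measurable_demandCost {β : Type*} [MeasurableSpace β] [SFinite μ] {h : β → α → ℝ}
    (hh : Measurable fun p : β × α => h p.1 p.2) (hf : Measurable fun p : α × ℝ => f p.1 p.2)
    (y : ℝ) : Measurable fun b => demandCost μ (h b) f y :=
  (measurable_demandCost_integrand (f := fun p : β × α => f p.2) hh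
    (hf.comp (measurable_fst.snd.prodMk measurable_snd)) y).lintegral_prod_right'

theorem antitoneOn_demandCost (hh : ∀ x, 0 < h x) (hf : ∀ x, AntitoneOn (f x) (Ioi 0)) :
    AntitoneOn (demandCost μ h f) (Ioi 0) :=
  antitoneOn_lintegral fun x => antitoneOn_ofReal_mul_comp_mul (hh x) (hf x)

theorem demandCost_ne_top_of_le {K : ℝ} (hh_int : Integrable h μ) (hh : ∀ x, 0 < h x)
    (hfK : ∀ x z, 0 < z → f x z ≤ K) {y : ℝ} (hy : 0 < y) : demandCost μ h f y ≠ ∞ := by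
  refine ne_top_of_le_ne_top (hh_int.const_mul K).lintegral_lt_top.ne
    (lintegral_mono fun x => ENNReal.ofReal_le_ofReal ?_)
  rw [mul_comm K]
  exact mul_le_mul_of_nonneg_left (hfK x _ (mul_pos hy (hh x))) (hh x).le

variable (hh_meas : Measurable h) (hf_meas : Measurable fun p : α × ℝ => f p.1 p.2)
  (hh : ∀ x, 0 < h x) (hf_anti : ∀ x, AntitoneOn (f x) (Ioi 0))
include hh_meas hf_meas hh hf_anti

theorem continuousAt_demandCost (hf_cont : ∀ x, ContinuousOn (f x) (Ioi 0)) {y : ℝ} (hy : 0 < y)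
    (hfin : demandCost μ h f (y / 2) ≠ ∞) : ContinuousAt (demandCost μ h f) y :=
  tendsto_lintegral_of_antitoneOn_Ici (measurable_demandCost_integrand hh_meas hf_meas)
    (fun x => (antitoneOn_ofReal_mul_comp_mul (hh x) (hf_anti x)).mono
      (Ici_subset_Ioi.2 (half_pos hy)))
    (eventually_ge_nhds (half_lt_self hy)) hfin
    (.of_forall fun x => continuousAt_ofReal_mul_comp_mul (hh x) (hf_cont x) hy)

theorem tendsto_demandCost_atTop {g : α → ℝ} (hf_lim : ∀ x, Tendsto (f x) atTop (𝓝 (g x)))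
    {a : ℝ} (ha : 0 < a) (hfin : demandCost μ h f a ≠ ∞) :
    Tendsto (demandCost μ h f) atTop (𝓝 (∫⁻ x, ENNReal.ofReal (h x * g x) ∂μ)) :=
  tendsto_lintegral_of_antitoneOn_Ici (measurable_demandCost_integrand hh_meas hf_meas)
    (fun x => (antitoneOn_ofReal_mul_comp_mul (hh x) (hf_anti x)).mono (Ici_subset_Ioi.2 ha))
    (eventually_ge_atTop a) hfin
    (.of_forall fun x => tendsto_ofReal_mul_comp_mul_atTop (hh x) (hf_lim x))

theorem tendsto_demandCost_nhdsGT_zero (hμ : μ ≠ 0)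
    (hf_lim : ∀ x, Tendsto (f x) (𝓝[>] 0) atTop) :
    Tendsto (demandCost μ h f) (𝓝[>] 0) (𝓝 ∞) := by
  have h_lim := tendsto_lintegral_nhdsGT_of_antitoneOn (μ := μ) (g := fun _ => ∞)
    (measurable_demandCost_integrand hh_meas hf_meas)
    (fun x => antitoneOn_ofReal_mul_comp_mul (hh x) (hf_anti x))
    (.of_forall fun x => tendsto_ofReal_mul_comp_mul_nhdsGT_zero (hh x) (hf_lim x))
  rwa [lintegral_const, ENNReal.top_mul (Measure.measure_univ_ne_zero.2 hμ)] at h_lim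

end DemandCost

section DemandCostMixture

variable {α β : Type*} [MeasurableSpace α] [MeasurableSpace β] {μ : Measure α} [SFinite μ]
  {P : Measure β} {f : α → ℝ → ℝ} {H : β → α → ℝ}
  (hf_meas : Measurable fun p : α × ℝ => f p.1 p.2) (hf_anti : ∀ x, AntitoneOn (f x) (Ioi 0))
  (hH_meas : Measurable fun p : β × α => H p.1 p.2) (hH : ∀ b x, 0 < H b x)
include hH_meas hH hf_meas hf_anti

theorem continuousAt_lintegral_demandCost (hf_cont : ∀ x, ContinuousOn (f x) (Ioi 0)) {y : ℝ}
    (hy : 0 < y) (hfin : ∫⁻ b, demandCost μ (H b) f (y / 2) ∂P ≠ ∞) :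
    ContinuousAt (fun y => ∫⁻ b, demandCost μ (H b) f y ∂P) y :=
  tendsto_lintegral_of_antitoneOn_Ici (measurable_demandCost hH_meas hf_meas)
    (fun b => (antitoneOn_demandCost (hH b) hf_anti).mono (Ici_subset_Ioi.2 (half_pos hy)))
    (eventually_ge_nhds (half_lt_self hy)) hfin
    ((ae_lt_top (measurable_demandCost hH_meas hf_meas _) hfin).mono fun b hb =>
      continuousAt_demandCost (hH_meas.comp measurable_prodMk_left) hf_meas (hH b) hf_anti
        hf_cont hy hb.ne)

theorem tendsto_lintegral_demandCost_atTop {g : α → ℝ}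
    (hf_lim : ∀ x, Tendsto (f x) atTop (𝓝 (g x))) {a : ℝ} (ha : 0 < a)
    (hfin : ∫⁻ b, demandCost μ (H b) f a ∂P ≠ ∞) :
    Tendsto (fun y => ∫⁻ b, demandCost μ (H b) f y ∂P) atTop
      (𝓝 (∫⁻ b, ∫⁻ x, ENNReal.ofReal (H b x * g x) ∂μ ∂P)) :=
  tendsto_lintegral_of_antitoneOn_Ici (measurable_demandCost hH_meas hf_meas)
    (fun b => (antitoneOn_demandCost (hH b) hf_anti).mono (Ici_subset_Ioi.2 ha))
    (eventually_ge_atTop a) hfin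
    ((ae_lt_top (measurable_demandCost hH_meas hf_meas _) hfin).mono fun b hb =>
      tendsto_demandCost_atTop (hH_meas.comp measurable_prodMk_left) hf_meas (hH b) hf_anti
        hf_lim ha hb.ne)

theorem tendsto_lintegral_demandCost_nhdsGT_zero (hP : P ≠ 0) (hμ : μ ≠ 0)
    (hf_lim : ∀ x, Tendsto (f x) (𝓝[>] 0) atTop) :
    Tendsto (fun y => ∫⁻ b, demandCost μ (H b) f y ∂P) (𝓝[>] 0) (𝓝 ∞) := by
  have h_lim := tendsto_lintegral_nhdsGT_of_antitoneOn (μ := P) (g := fun _ => ∞)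
    (measurable_demandCost hH_meas hf_meas) (fun b => antitoneOn_demandCost (hH b) hf_anti)
    (.of_forall fun b => tendsto_demandCost_nhdsGT_zero (hH_meas.comp measurable_prodMk_left)
      hf_meas (hH b) hf_anti hμ hf_lim)
  rwa [lintegral_const, ENNReal.top_mul (Measure.measure_univ_ne_zero.2 hP)] at h_lim

end DemandCostMixture

theorem stmt_12_general
    {Ω : Type*} [MeasurableSpace Ω] (P : Measure Ω) [IsProbabilityMeasure P]
    (T K : ℝ) (hT : 0 < T)
    -- H : [0,T] × Ω → (0,∞) jointly measurable, E[H_T] < ∞: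
    (H : ℝ → Ω → ℝ) (hHmeas : Measurable fun p : ℝ × Ω => H p.1 p.2)
    (hHpos : ∀ t ω, 0 < H t ω)
    (hHTint : Integrable (H T) P)
    -- x̄₁ : [0,T] → [0,∞) measurable with E∫₀^T H_t·x̄₁(t) dt < ∞:
    (xb : ℝ → ℝ)
    -- I₁ : [0,T] × (0,∞) → [0,∞):
    (I₁ : ℝ → ℝ → ℝ) (hI₁meas : Measurable fun p : ℝ × ℝ => I₁ p.1 p.2)
    (hI₁cont : ∀ t, ContinuousOn (I₁ t) (Ioi 0))
    (hI₁anti : ∀ t, AntitoneOn (I₁ t) (Ioi 0))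
    (hI₁zero : ∀ t, Tendsto (I₁ t) (nhdsWithin 0 (Ioi 0)) atTop)
    (hI₁top : ∀ t, Tendsto (I₁ t) atTop (nhds (xb t)))
    -- I₂ : (0,∞) → [0,K]:
    (I₂ : ℝ → ℝ) (hI₂meas : Measurable I₂)
    (hI₂range : ∀ y, 0 < y → I₂ y ∈ Icc 0 K)
    (hI₂cont : ContinuousOn I₂ (Ioi 0))
    (hI₂anti : AntitoneOn I₂ (Ioi 0))
    (hI₂top : Tendsto I₂ atTop (nhds 0))
    -- the function 𝒳, assumed finite for every y > 0:
    (X : ℝ → ℝ)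
    (hX : ∀ y : ℝ, 0 < y → X y =
      (∫⁻ ω, ENNReal.ofReal (H T ω * I₂ (y * H T ω)) ∂P
        + ∫⁻ ω, (∫⁻ t in Icc (0 : ℝ) T,
            ENNReal.ofReal (H t ω * I₁ t (y * H t ω))) ∂P).toReal)
    (hXfin : ∀ y : ℝ, 0 < y →
      ∫⁻ ω, (∫⁻ t in Icc (0 : ℝ) T,
        ENNReal.ofReal (H t ω * I₁ t (y * H t ω))) ∂P ≠ ⊤) :
    -- conclusions:
    AntitoneOn X (Ioi 0) ∧
    ContinuousOn X (Ioi 0) ∧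
    Tendsto X (nhdsWithin 0 (Ioi 0)) atTop ∧
    Tendsto X atTop
      (nhds ((∫⁻ ω, (∫⁻ t in Icc (0 : ℝ) T,
          ENNReal.ofReal (H t ω * xb t)) ∂P).toReal)) := by
  set ν := volume.restrict (Icc (0 : ℝ) T)
  have hν : ν ≠ 0 := by simp [ν, Measure.restrict_eq_zero, hT]
  have hHT_meas : Measurable (H T) := hHmeas.comp (measurable_const.prodMk measurable_id)
  have hH_meas : Measurable fun p : Ω × ℝ => H p.2 p.1 := hHmeas.comp measurable_swap
  have hI₂_meas : Measurable fun p : Ω × ℝ => I₂ p.2 := hI₂meas.comp measurable_snd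
  have hH_pos : ∀ ω t, 0 < H t ω := fun ω t => hHpos t ω
  set A := demandCost P (H T) fun _ => I₂
  set B := fun y => ∫⁻ ω, demandCost ν (fun t => H t ω) I₁ y ∂P
  have hA_fin : ∀ y, 0 < y → A y ≠ ∞ := fun y =>
    demandCost_ne_top_of_le hHTint (hHpos T) fun _ z hz => (hI₂range z hz).2
  have hA_top : Tendsto A atTop (𝓝 0) := by
    simpa using tendsto_demandCost_atTop hHT_meas hI₂_meas (hHpos T) (fun _ => hI₂anti)
      (fun _ => hI₂top) one_pos (hA_fin 1 one_pos)
  have hB_anti : AntitoneOn B (Ioi 0) :=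
    antitoneOn_lintegral fun ω => antitoneOn_demandCost (hH_pos ω) hI₁anti
  have hB_top := tendsto_lintegral_demandCost_atTop hI₁meas hI₁anti hH_meas hH_pos hI₁top one_pos
    (hXfin 1 one_pos)
  have hL_fin := ne_top_of_le_ne_top (hXfin 1 one_pos) <| le_of_tendsto hB_top (b := B 1) <|
    (eventually_ge_atTop 1).mono fun y hy =>
      hB_anti (mem_Ioi.2 one_pos) (mem_Ioi.2 (one_pos.trans_le hy)) hy
  refine antitoneOn_continuousOn_tendsto_of_eqOn_toReal (φ := fun y => A y + B y) hX
    (fun y hy => ENNReal.add_ne_top.2 ⟨hA_fin y hy, hXfin y hy⟩)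
    ((antitoneOn_demandCost (hHpos T) fun _ => hI₂anti).add hB_anti)
    (fun y hy => (continuousAt_demandCost hHT_meas hI₂_meas (hHpos T) (fun _ => hI₂anti)
      (fun _ => hI₂cont) hy (hA_fin _ (half_pos hy))).add
      (continuousAt_lintegral_demandCost hI₁meas hI₁anti hH_meas hH_pos hI₁cont hy
        (hXfin _ (half_pos hy))))
    (tendsto_nhds_top_mono (tendsto_lintegral_demandCost_nhdsGT_zero hI₁meas hI₁anti hH_meas
      hH_pos (IsProbabilityMeasure.ne_zero P) hν hI₁zero) (.of_forall fun _ => le_add_self))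
    (by simpa using hA_top.add hB_top) hL_fin

theorem stmt_12
    {Ω : Type*} [MeasurableSpace Ω] (P : Measure Ω) [IsProbabilityMeasure P]
    (T K : ℝ) (hT : 0 < T) (hK : 0 < K)
    -- H : [0,T] × Ω → (0,∞) jointly measurable, E[H_T] < ∞:
    (H : ℝ → Ω → ℝ) (hHmeas : Measurable fun p : ℝ × Ω => H p.1 p.2)
    (hHpos : ∀ t ω, 0 < H t ω)
    (hHTint : Integrable (H T) P)
    -- x̄₁ : [0,T] → [0,∞) measurable with E∫₀^T H_t·x̄₁(t) dt < ∞: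
    (xb : ℝ → ℝ) (hxbmeas : Measurable xb) (hxbnonneg : ∀ t, 0 ≤ xb t)
    (hxbfin : ∫⁻ ω, (∫⁻ t in Icc (0 : ℝ) T, ENNReal.ofReal (H t ω * xb t)) ∂P ≠ ⊤)
    -- I₁ : [0,T] × (0,∞) → [0,∞):
    (I₁ : ℝ → ℝ → ℝ) (hI₁meas : Measurable fun p : ℝ × ℝ => I₁ p.1 p.2)
    (hI₁nonneg : ∀ t y, 0 < y → 0 ≤ I₁ t y)
    (hI₁cont : ∀ t, ContinuousOn (I₁ t) (Ioi 0))
    (hI₁anti : ∀ t, AntitoneOn (I₁ t) (Ioi 0))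
    (hI₁zero : ∀ t, Tendsto (I₁ t) (nhdsWithin 0 (Ioi 0)) atTop)
    (hI₁top : ∀ t, Tendsto (I₁ t) atTop (nhds (xb t)))
    -- I₂ : (0,∞) → [0,K]:
    (I₂ : ℝ → ℝ) (hI₂meas : Measurable I₂)
    (hI₂range : ∀ y, 0 < y → I₂ y ∈ Icc 0 K)
    (hI₂cont : ContinuousOn I₂ (Ioi 0))
    (hI₂anti : AntitoneOn I₂ (Ioi 0))
    (hI₂top : Tendsto I₂ atTop (nhds 0))
    -- the function 𝒳, assumed finite for every y > 0:
    (X : ℝ → ℝ)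
    (hX : ∀ y : ℝ, 0 < y → X y =
      (∫⁻ ω, ENNReal.ofReal (H T ω * I₂ (y * H T ω)) ∂P
        + ∫⁻ ω, (∫⁻ t in Icc (0 : ℝ) T,
            ENNReal.ofReal (H t ω * I₁ t (y * H t ω))) ∂P).toReal)
    (hXfin : ∀ y : ℝ, 0 < y →
      ∫⁻ ω, (∫⁻ t in Icc (0 : ℝ) T,
        ENNReal.ofReal (H t ω * I₁ t (y * H t ω))) ∂P ≠ ⊤) :
    -- conclusions:
    AntitoneOn X (Ioi 0) ∧
    ContinuousOn X (Ioi 0) ∧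
    Tendsto X (nhdsWithin 0 (Ioi 0)) atTop ∧
    Tendsto X atTop
      (nhds ((∫⁻ ω, (∫⁻ t in Icc (0 : ℝ) T,
          ENNReal.ofReal (H t ω * xb t)) ∂P).toReal)) :=
  stmt_12_general P T K hT H hHmeas hHpos hHTint xb I₁ hI₁meas hI₁cont hI₁anti hI₁zero hI₁top I₂
    hI₂meas hI₂range hI₂cont hI₂anti hI₂top X hX hXfin
end
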